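/- arXiv:1812.01853 — 5 statements merged into one kernel-verified Lean document; each statement's English description precedes it below -/
import Mathlib

section
/- Let ≺ be a transitive relation on a set T. If a size-change matrix A of dimension m × n abstracts the pair (s, t) ∈ T^m × T^n with respect to ≺, and a size-change matrix B of dimension n × p abstracts the pair (t, u) ∈ T^n × T^p with respect to ≺, then the product matrix A·B abstracts the pair (s, u) with respect to ≺. -/
/-- Entries of a size-change matrix: −1, 0 or ∞. -/
inductive SC : Type
  | minusOne
  | zero
  | infty
  deriving DecidableEq

/-- Composition of two entries: `∞` if one of them is `∞`, else `−1` if one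
of them is `−1`, else `0`. -/
def SC.comp : SC → SC → SC
  | .infty, _ => .infty
  | _, .infty => .infty
  | .minusOne, _ => .minusOne
  | _, .minusOne => .minusOne
  | _, _ => .zero

/-- Minimum of two entries for the order `−1 < 0 < ∞`. -/
def SC.min : SC → SC → SC
  | .minusOne, _ => .minusOne
  | _, .minusOne => .minusOne
  | .zero, _ => .zero
  | _, .zero => .zero
  | _, _ => .infty

/-- Product of an `m × n` size-change matrix with an `n × p` one (matrices are
encoded as total functions `ℕ → ℕ → SC`; only the entries below the dimensions
are relevant): `(A·B)_{ik} = min_{j < n} (A_{ij} ⊗ B_{jk})`. -/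
def matProd (n : ℕ) (A B : ℕ → ℕ → SC) : ℕ → ℕ → SC := fun i k =>
  ((List.range n).map fun j => (A i j).comp (B j k)).foldr SC.min SC.infty

/-- A size-change matrix `A` of dimension `m × n` abstracts the pair of tuples
`(s, t)` with respect to the relation `r`: `A_{ij} = −1` implies `r (t j) (s i)`
(i.e. `t j ≺ s i`) and `A_{ij} = 0` implies `t j = s i`. -/
def Abstracts {T : Type*} (r : T → T → Prop) (m n : ℕ)
    (A : ℕ → ℕ → SC) (s t : ℕ → T) : Prop :=
  ∀ i < m, ∀ j < n,
    (A i j = SC.minusOne → r (t j) (s i)) ∧ (A i j = SC.zero → t j = s i)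

/-! Each entry of `A·B` other than `∞` is one of the compositions `A_{ij} ⊗ B_{jk}` with `j < n`,
since `min` always returns one of its arguments. An entry `A_{ij} ⊗ B_{jk}` abstracts
`(s_i, u_k)` by going through `t_j`: a strict decrease on either side gives `u_k ≺ s_i` by
transitivity, and two equalities give `u_k = s_i`. -/

theorem List.foldr_mem_or_eq_init {α : Type*} {f : α → α → α}
    (hf : ∀ a b, f a b = a ∨ f a b = b) (init : α) (l : List α) :
    l.foldr f init ∈ l ∨ l.foldr f init = init := by
  induction l with
  | nil => exact Or.inr rfl
  | cons a l ih =>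
    rcases hf a (l.foldr f init) with h | h <;> rw [List.foldr_cons, h]
    · exact Or.inl List.mem_cons_self
    · exact ih.imp_left (List.mem_cons_of_mem a)

theorem SC.min_eq_or (a b : SC) : SC.min a b = a ∨ SC.min a b = b := by
  cases a <;> cases b <;> simp [SC.min]

theorem matProd_eq_comp_of_ne_infty {n : ℕ} {A B : ℕ → ℕ → SC} {i k : ℕ}
    (h : matProd n A B i k ≠ SC.infty) :
    ∃ j < n, matProd n A B i k = (A i j).comp (B j k) := by
  rcases List.foldr_mem_or_eq_init SC.min_eq_or SC.infty _ with hmem | hinit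
  · obtain ⟨j, hj, hjk⟩ := List.mem_map.mp hmem
    exact ⟨j, List.mem_range.mp hj, hjk.symm⟩
  · exact absurd hinit h

def SC.Abstracts {T : Type*} (r : T → T → Prop) (a : SC) (x y : T) : Prop :=
  (a = SC.minusOne → r y x) ∧ (a = SC.zero → y = x)

theorem SC.abstracts_infty {T : Type*} (r : T → T → Prop) (x y : T) :
    SC.infty.Abstracts r x y := by
  simp [SC.Abstracts]

theorem SC.Abstracts.comp {T : Type*} {r : T → T → Prop} [IsTrans T r] {a b : SC} {x y z : T}
    (ha : a.Abstracts r x y) (hb : b.Abstracts r y z) : (a.comp b).Abstracts r x z := by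
  obtain ⟨ha₁, ha₀⟩ := ha
  obtain ⟨hb₁, hb₀⟩ := hb
  cases a <;> cases b <;> simp only [SC.comp] <;> constructor <;> intro h <;> cases h
  · exact trans_of r (hb₁ rfl) (ha₁ rfl)
  · exact hb₀ rfl ▸ ha₁ rfl
  · exact ha₀ rfl ▸ hb₁ rfl
  · exact (hb₀ rfl).trans (ha₀ rfl)

/-- If `A` abstracts `(s, t)` and `B` abstracts `(t, u)` with respect to a
transitive relation `≺`, then the product `A·B` abstracts `(s, u)`. -/
theorem matProd_abstracts {T : Type*} (r : T → T → Prop) (htrans : Transitive r)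
    (m n p : ℕ) (A B : ℕ → ℕ → SC) (s t u : ℕ → T)
    (hA : Abstracts r m n A s t) (hB : Abstracts r n p B t u) :
    Abstracts r m p (matProd n A B) s u := by
  have : IsTrans T r := ⟨fun _ _ _ => @htrans _ _ _⟩
  intro i hi k hk
  show (matProd n A B i k).Abstracts r (s i) (u k)
  by_cases hinf : matProd n A B i k = SC.infty
  · exact hinf ▸ SC.abstracts_infty r (s i) (u k)
  obtain ⟨j, hj, hjk⟩ := matProd_eq_comp_of_ne_infty hinf
  rw [hjk]
  exact SC.Abstracts.comp (hA i hi j hj) (hB j hj k hk)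
end

section
/- Let ≺ be a transitive well-founded relation on a set T and let m ∈ ℕ. There do not exist a sequence (M_k)_{k∈ℕ} of size-change matrices of dimension m × m and a sequence (v_k)_{k∈ℕ} of tuples v_k ∈ T^m such that: (1) for every k, M_k abstracts the pair (v_k, v_{k+1}) with respect to ≺, and (2) for all a ≤ b, the product M_a·M_{a+1}·…·M_b has at least one entry equal to −1 on its diagonal. -/
/-- `prodMats m M a len` is the product `M_a · M_{a+1} · … · M_{a+len}` of the
`m × m` size-change matrices `M_a, …, M_{a+len}`. -/
def prodMats (m : ℕ) (M : ℕ → (ℕ → ℕ → SC)) : ℕ → ℕ → (ℕ → ℕ → SC)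
  | a, 0 => M a
  | a, len + 1 => matProd m (M a) (prodMats m M (a + 1) len)

/- Products of abstracting matrices abstract the composed pair, because `⊗` tracks how a chain of
`=` and `≺` steps composes under transitivity. So for `a < b` the matrix `M_a ⋯ M_{b-1}` abstracts
`(v_a, v_b)`, and its diagonal `−1` yields a coordinate `i` with `v_b i ≺ v_a i`. Going through the
coordinates one at a time, the two-colour Ramsey lemma for consecutive pairs either produces an
infinite `≺`-descent in coordinate `i`, impossible by well-foundedness, or a subsequence along which
coordinate `i` never descends; after all `m` coordinates no pair of the subsequence can descend. -/

namespace SC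

lemma mem_of_foldr_min_eq {l : List SC} {x : SC} (hx : x ≠ .infty)
    (h : l.foldr SC.min .infty = x) : x ∈ l := by
  induction l generalizing x with
  | nil => exact absurd h.symm hx
  | cons a l ih =>
    rw [List.foldr_cons] at h
    cases a <;> cases hl : l.foldr SC.min .infty <;> cases x <;>
      simp_all [SC.min]

lemma comp_eq_minusOne {x y : SC} (h : x.comp y = .minusOne) :
    (x = .minusOne ∧ y = .minusOne) ∨ (x = .minusOne ∧ y = .zero) ∨
      (x = .zero ∧ y = .minusOne) := by
  cases x <;> cases y <;> simp_all [SC.comp]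

lemma comp_eq_zero {x y : SC} (h : x.comp y = .zero) : x = .zero ∧ y = .zero := by
  cases x <;> cases y <;> simp_all [SC.comp]

end SC

lemma exists_comp_eq_of_matProd_eq {n : ℕ} {A B : ℕ → ℕ → SC} {i k : ℕ} {x : SC}
    (hx : x ≠ .infty) (h : matProd n A B i k = x) :
    ∃ j < n, (A i j).comp (B j k) = x := by
  obtain ⟨j, hj, hjx⟩ := List.mem_map.mp (SC.mem_of_foldr_min_eq hx h)
  exact ⟨j, List.mem_range.mp hj, hjx⟩

lemma Abstracts.matProd {T : Type*} {r : T → T → Prop} [IsTrans T r] {m n p : ℕ}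
    {A B : ℕ → ℕ → SC} {s t u : ℕ → T}
    (hA : Abstracts r m n A s t) (hB : Abstracts r n p B t u) :
    Abstracts r m p (matProd n A B) s u := by
  intro i hi k hk
  constructor
  · intro h
    obtain ⟨j, hj, hc⟩ := exists_comp_eq_of_matProd_eq (by decide) h
    rcases SC.comp_eq_minusOne hc with ⟨hAij, hBjk⟩ | ⟨hAij, hBjk⟩ | ⟨hAij, hBjk⟩
    · exact _root_.trans ((hB j hj k hk).1 hBjk) ((hA i hi j hj).1 hAij)
    · exact (hB j hj k hk).2 hBjk ▸ (hA i hi j hj).1 hAij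
    · exact (hA i hi j hj).2 hAij ▸ (hB j hj k hk).1 hBjk
  · intro h
    obtain ⟨j, hj, hc⟩ := exists_comp_eq_of_matProd_eq (by decide) h
    obtain ⟨hAij, hBjk⟩ := SC.comp_eq_zero hc
    exact ((hB j hj k hk).2 hBjk).trans ((hA i hi j hj).2 hAij)

lemma abstracts_prodMats {T : Type*} {r : T → T → Prop} [IsTrans T r]
    {m : ℕ} {M : ℕ → ℕ → ℕ → SC} {v : ℕ → ℕ → T}
    (habs : ∀ k, Abstracts r m m (M k) (v k) (v (k + 1))) (a len : ℕ) :
    Abstracts r m m (prodMats m M a len) (v a) (v (a + len + 1)) := by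
  induction len generalizing a with
  | zero => exact habs a
  | succ len ih =>
    have hrest := ih (a + 1)
    rw [show a + 1 + len + 1 = a + (len + 1) + 1 by omega] at hrest
    exact (habs a).matProd hrest

lemma exists_subseq_forall_not_rel {T ι : Type*} {r : T → T → Prop} (hwf : WellFounded r)
    (v : ℕ → ι → T) (s : Finset ι) :
    ∃ g : ℕ ↪o ℕ, ∀ i ∈ s, ∀ a b, a < b → ¬ r (v (g b) i) (v (g a) i) := by
  classical
  induction s using Finset.induction_on with
  | empty => exact ⟨RelEmbedding.refl _, by simp⟩
  | insert i s _ ih =>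
    obtain ⟨g, hg⟩ := ih
    obtain ⟨h, hdesc | hnone⟩ :=
      exists_increasing_or_nonincreasing_subseq' (fun x y => r (y i) (x i)) (v ∘ g)
    · exact (wellFounded_iff_isEmpty_descending_chain.mp hwf).elim
        ⟨fun n => v (g (h n)) i, hdesc⟩
    · refine ⟨h.trans g, fun j hj a b hab => ?_⟩
      rcases Finset.mem_insert.mp hj with rfl | hjs
      · exact hnone a b hab
      · exact hg j hjs _ _ (h.strictMono hab)

theorem not_forall_lt_exists_rel {T ι : Type*} {r : T → T → Prop} (hwf : WellFounded r)
    (v : ℕ → ι → T) (s : Finset ι) :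
    ¬ ∀ a b, a < b → ∃ i ∈ s, r (v b i) (v a i) := by
  intro hdesc
  obtain ⟨g, hg⟩ := exists_subseq_forall_not_rel hwf v s
  obtain ⟨i, hi, hrel⟩ := hdesc (g 0) (g 1) (g.strictMono zero_lt_one)
  exact hg i hi 0 1 zero_lt_one hrel

/-- If `≺` is a transitive well-founded relation on `T`, there is no sequence
of `m × m` size-change matrices `(M_k)` and of tuples `(v_k)` in `T^m` such
that each `M_k` abstracts `(v_k, v_{k+1})` and every product
`M_a · … · M_b` (for `a ≤ b`) has a `−1` somewhere on its diagonal. -/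
theorem no_infinite_sc_abstracted_sequence {T : Type*} (r : T → T → Prop)
    (htrans : Transitive r) (hwf : WellFounded r) (m : ℕ) :
    ¬ ∃ (M : ℕ → (ℕ → ℕ → SC)) (v : ℕ → ℕ → T),
        (∀ k, Abstracts r m m (M k) (v k) (v (k + 1))) ∧
        (∀ a b, a ≤ b → ∃ i < m, (prodMats m M a (b - a)) i i = SC.minusOne) := by
  rintro ⟨M, v, habs, hdiag⟩
  have : IsTrans T r := ⟨htrans⟩
  refine not_forall_lt_exists_rel hwf v (Finset.range m) fun a b hab => ?_
  obtain ⟨i, hi, hM⟩ := hdiag a (b - 1) (by omega)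
  have hprod := abstracts_prodMats habs a (b - 1 - a)
  rw [show a + (b - 1 - a) + 1 = b by omega] at hprod
  exact ⟨i, Finset.mem_range.mpr hi, (hprod i hi i hi).1 hM⟩
end

section
/- Let f p₁ … p_m → r be a rewrite rule over first-order terms whose left-hand side arguments p₁,…,p_m are patterns, let g u₁ … u_n be a subterm of r, and let A be the associated call matrix, i.e. the m × n matrix over {−1, 0, ∞} with A_{ij} = −1 if u_j ⊲ p_i, A_{ij} = 0 if u_j = p_i, and A_{ij} = ∞ otherwise. Then for every substitution γ (a map from variables to terms, extended homomorphically to terms), the matrix A abstracts the pair ((p₁γ,…,p_mγ), (u₁γ,…,u_nγ)) with respect to ⊲; that is, A_{ij} = −1 implies u_jγ ⊲ p_iγ, and A_{ij} = 0 implies u_jγ = p_iγ. -/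
/-- First-order terms over a signature `Sig` with arity function `ar`:
a term is either a variable (from the countably infinite set `ℕ`) or a
symbol applied to as many terms as its arity. -/
inductive Term (Sig : Type) (ar : Sig → ℕ) : Type
  | var : ℕ → Term Sig ar
  | app : (f : Sig) → (Fin (ar f) → Term Sig ar) → Term Sig ar

/-- Patterns: terms built only from variables and fully applied constructors
(`isCon c` meaning that the symbol `c` is a constructor). -/
inductive Pattern {Sig : Type} {ar : Sig → ℕ} (isCon : Sig → Prop) :
    Term Sig ar → Prop
  | var (x : ℕ) : Pattern isCon (Term.var x)
  | con (c : Sig) (hc : isCon c) (ts : Fin (ar c) → Term Sig ar) :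
      (∀ i, Pattern isCon (ts i)) → Pattern isCon (Term.app c ts)

/-- The strict constructor subterm relation `⊲`: the smallest transitive
relation such that `t_i ⊲ c t₁ … t_n` for every constructor `c`. -/
inductive CSub {Sig : Type} {ar : Sig → ℕ} (isCon : Sig → Prop) :
    Term Sig ar → Term Sig ar → Prop
  | arg (c : Sig) (hc : isCon c) (ts : Fin (ar c) → Term Sig ar) (i : Fin (ar c)) :
      CSub isCon (ts i) (Term.app c ts)
  | trans {a b c : Term Sig ar} :
      CSub isCon a b → CSub isCon b c → CSub isCon a c

/-- Application of a substitution (a map from variables to terms), extended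
homomorphically to terms. -/
def subst {Sig : Type} {ar : Sig → ℕ} (γ : ℕ → Term Sig ar) :
    Term Sig ar → Term Sig ar
  | .var x => γ x
  | .app f ts => .app f (fun i => subst γ (ts i))

/-- Direct (one-step) subterm: `t_i` is a direct subterm of `f t₁ … t_n`. -/
inductive DirectSub {Sig : Type} {ar : Sig → ℕ} : Term Sig ar → Term Sig ar → Prop
  | arg (f : Sig) (ts : Fin (ar f) → Term Sig ar) (i : Fin (ar f)) :
      DirectSub (ts i) (Term.app f ts)

/-- `SubtermOf s t`: `s` is a (not necessarily strict) subterm of `t`. -/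
def SubtermOf {Sig : Type} {ar : Sig → ℕ} : Term Sig ar → Term Sig ar → Prop :=
  Relation.ReflTransGen DirectSub

theorem CSub.apply_subst {Sig : Type} {ar : Sig → ℕ} {isCon : Sig → Prop}
    {a b : Term Sig ar} (γ : ℕ → Term Sig ar) (h : CSub isCon a b) :
    CSub isCon (subst γ a) (subst γ b) := by
  induction h with
  | arg c hc ts i => exact CSub.arg c hc (fun i => subst γ (ts i)) i
  | trans _ _ ih₁ ih₂ => exact ih₁.trans ih₂

theorem SC.converse_of_trichotomy {P Q : Prop} {a : SC}
    (h : (P → a = .minusOne) ∧ (¬P → Q → a = .zero) ∧ (¬P → ¬Q → a = .infty)) :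
    (a = .minusOne → P) ∧ (a = .zero → Q) := by
  by_cases P <;> by_cases Q <;> simp_all

theorem callMatrix_abstracts_instances_general {Sig : Type} (ar : Sig → ℕ)
    (isCon : Sig → Prop) (m n : ℕ)
    (p u : ℕ → Term Sig ar)
    (A : ℕ → ℕ → SC)
    (hA : ∀ i < m, ∀ j < n,
      (CSub isCon (u j) (p i) → A i j = SC.minusOne) ∧
      (¬ CSub isCon (u j) (p i) → u j = p i → A i j = SC.zero) ∧
      (¬ CSub isCon (u j) (p i) → u j ≠ p i → A i j = SC.infty)) :
    ∀ γ : ℕ → Term Sig ar,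
      Abstracts (CSub isCon) m n A
        (fun i => subst γ (p i)) (fun j => subst γ (u j)) := by
  intro γ i hi j hj
  obtain ⟨hsub, heq⟩ := SC.converse_of_trichotomy (hA i hi j hj)
  exact ⟨fun h => (hsub h).apply_subst γ, fun h => congrArg (subst γ) (heq h)⟩

/-- For a rewrite rule `f p₁ … p_m → r` with pattern arguments and a subterm
`g u₁ … u_n` of `r`, the associated call matrix `A` (with `A_{ij} = −1` if
`u_j ⊲ p_i`, `A_{ij} = 0` if `u_j = p_i`, and `A_{ij} = ∞` otherwise)
abstracts `((p₁γ, …, p_mγ), (u₁γ, …, u_nγ))` with respect to the strict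
constructor subterm relation `⊲`, for every substitution `γ`. -/
theorem callMatrix_abstracts_instances {Sig : Type} (ar : Sig → ℕ)
    (isCon : Sig → Prop) (m n : ℕ) (f g : Sig) (hf : ar f = m) (hg : ar g = n)
    (p u : ℕ → Term Sig ar) (rhs : Term Sig ar)
    (hp : ∀ i < m, Pattern isCon (p i))
    (hu : SubtermOf (Term.app g fun j => u j.val) rhs)
    (A : ℕ → ℕ → SC)
    (hA : ∀ i < m, ∀ j < n,
      (CSub isCon (u j) (p i) → A i j = SC.minusOne) ∧
      (¬ CSub isCon (u j) (p i) → u j = p i → A i j = SC.zero) ∧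
      (¬ CSub isCon (u j) (p i) → u j ≠ p i → A i j = SC.infty)) :
    ∀ γ : ℕ → Term Sig ar,
      Abstracts (CSub isCon) m n A
        (fun i => subst γ (p i)) (fun j => subst γ (u j)) :=
  callMatrix_abstracts_instances_general ar isCon m n p u A hA
end

section
/- Let → be a binary relation on first-order terms over a signature Σ that is closed under contexts, i.e. if t → t′ then f t₁ … t_{i−1} t t_{i+1} … t_n → f t₁ … t_{i−1} t′ t_{i+1} … t_n for every symbol f of arity n and every position i. Let SN denote the set of terms that are strongly normalizing for → (i.e. accessible for the inverse of →), and let ⊲ denote the strict subterm relation. Then the relation R defined by s R t iff (t → s or s ⊲ t) is well-founded on SN; in particular every strongly normalizing term is accessible for R. -/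
/-- The strict subterm relation `⊲`: the smallest transitive relation such
that `t_i ⊲ f t₁ … t_n` for every symbol `f` of arity `n`. -/
inductive Subterm {Sig : Type} {ar : Sig → ℕ} : Term Sig ar → Term Sig ar → Prop
  | arg (f : Sig) (ts : Fin (ar f) → Term Sig ar) (i : Fin (ar f)) :
      Subterm (ts i) (Term.app f ts)
  | trans {a b c : Term Sig ar} : Subterm a b → Subterm b c → Subterm a c

/-!
A rewrite step inside a subterm lifts to a rewrite step of the whole term (closure under contexts),
so a subterm step followed by a rewrite step can be traded for a rewrite step followed by a subterm
step. Since the subterm order is well-founded, a nested induction — on `→` at the outer level and on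
`⊲` among the subterms of the current term — shows accessibility for the union.
-/

theorem Acc.sup_of_commute {α : Type*} {r s : α → α → Prop} [IsTrans α s] (hs : WellFounded s)
    (hcomm : ∀ a b c, s a b → r c a → ∃ d, r d b ∧ s c d)
    {t : α} (ht : Acc r t) : Acc (fun a b => r a b ∨ s a b) t := by
  suffices h : ∀ x, x = t ∨ s x t → Acc (fun a b => r a b ∨ s a b) x from h t (.inl rfl)
  induction ht with
  | intro t _ ihr =>
    intro x hx
    induction x using hs.induction with
    | h x ihs =>
      refine .intro x fun y hy => ?_
      rcases hy, hx with ⟨hyx | hyx, rfl | hxt⟩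
      · exact ihr y hyx y (.inl rfl)
      · obtain ⟨d, hdt, hyd⟩ := hcomm x t y hxt hyx
        exact ihr d hdt y (.inr hyd)
      · exact ihs y hyx (.inr hyx)
      · exact ihs y hyx (.inr (_root_.trans hyx hxt))

variable {Sig : Type} {ar : Sig → ℕ}

namespace Subterm

theorem exists_arg {u t : Term Sig ar} (h : Subterm u t) :
    ∃ f ts i, t = Term.app f ts ∧ (u = ts i ∨ Subterm u (ts i)) := by
  induction h with
  | arg f ts i => exact ⟨f, ts, i, rfl, .inl rfl⟩
  | trans hab _ _ ihbc =>
    obtain ⟨f, ts, i, rfl, rfl | hb⟩ := ihbc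
    · exact ⟨f, ts, i, rfl, .inr hab⟩
    · exact ⟨f, ts, i, rfl, .inr (hab.trans hb)⟩

theorem wellFounded : WellFounded (@Subterm Sig ar) := by
  refine ⟨fun t => ?_⟩
  induction t with
  | var _ =>
    refine .intro _ fun u hu => ?_
    obtain ⟨_, _, _, h, _⟩ := hu.exists_arg
    cases h
  | app f ts ih =>
    refine .intro _ fun u hu => ?_
    obtain ⟨g, us, i, h, hi⟩ := hu.exists_arg
    obtain ⟨rfl, h⟩ := Term.app.inj h
    obtain rfl := eq_of_heq h
    rcases hi with rfl | hi
    · exact ih i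
    · exact (ih i).inv hi

end Subterm

instance : IsTrans (Term Sig ar) Subterm := ⟨fun _ _ _ => Subterm.trans⟩

def ClosedUnderContexts (rw : Term Sig ar → Term Sig ar → Prop) : Prop :=
  ∀ t t', rw t t' → ∀ (f : Sig) (ts : Fin (ar f) → Term Sig ar) (i : Fin (ar f)),
    rw (Term.app f (Function.update ts i t)) (Term.app f (Function.update ts i t'))

theorem Subterm.exists_rw_of_rw {rw : Term Sig ar → Term Sig ar → Prop}
    (hctx : ClosedUnderContexts rw) {s t u : Term Sig ar} (hst : Subterm s t) (hsu : rw s u) :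
    ∃ t', rw t t' ∧ Subterm u t' := by
  induction hst generalizing u with
  | arg f ts i =>
    refine ⟨Term.app f (Function.update ts i u), ?_, ?_⟩
    · simpa using hctx (ts i) u hsu f ts i
    · simpa using Subterm.arg f (Function.update ts i u) i
  | trans _ _ ihab ihbc =>
    obtain ⟨b', hbb', hub'⟩ := ihab hsu
    obtain ⟨t', htt', hb't'⟩ := ihbc hbb'
    exact ⟨t', htt', hub'.trans hb't'⟩

/-- If `→` is a binary relation on first-order terms closed under contexts,
then the relation `R` defined by `s R t` iff (`t → s` or `s ⊲ t`) is
well-founded on the set of strongly normalizing terms: every term that is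
accessible for the inverse of `→` (i.e. strongly normalizing) is accessible
for `R`. -/
theorem sn_acc_rew_union_subterm {Sig : Type} (ar : Sig → ℕ)
    (rw : Term Sig ar → Term Sig ar → Prop)
    (hctx : ∀ t t', rw t t' →
      ∀ (f : Sig) (ts : Fin (ar f) → Term Sig ar) (i : Fin (ar f)),
        rw (Term.app f (Function.update ts i t))
           (Term.app f (Function.update ts i t'))) :
    ∀ t : Term Sig ar, Acc (fun a b => rw b a) t →
      Acc (fun s t => rw t s ∨ Subterm s t) t :=
  fun _ ht => ht.sup_of_commute Subterm.wellFounded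
    fun _ _ _ hab hac => Subterm.exists_rw_of_rw hctx hab hac
end

section
/- Consider the signature with symbols 0 (arity 0), S (arity 1), P (arity 1), aux (arity 1) and returnZero (arity 1), and the rewrite system consisting of the six rules: S (P x) → x; P (S x) → x; returnZero x → aux x; aux 0 → 0; aux (S x) → returnZero x; aux (P x) → returnZero x. The rewrite relation generated by these rules (the closure of the rules under substitutions and under contexts) is strongly normalizing: there is no infinite rewrite sequence starting from any term. -/
/-- The rewrite relation generated by a set `R` of rules (pairs
left-hand side / right-hand side): closure of the rules under substitutions
and under contexts. -/
inductive Rew {Sig : Type} {ar : Sig → ℕ} (R : Set (Term Sig ar × Term Sig ar)) :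
    Term Sig ar → Term Sig ar → Prop
  | rule {l r : Term Sig ar} (h : (l, r) ∈ R) (γ : ℕ → Term Sig ar) :
      Rew R (subst γ l) (subst γ r)
  | ctx {t t' : Term Sig ar} (h : Rew R t t')
      (f : Sig) (ts : Fin (ar f) → Term Sig ar) (i : Fin (ar f)) :
      Rew R (Term.app f (Function.update ts i t))
            (Term.app f (Function.update ts i t'))

/-- The signature with symbols `0`, `S`, `P`, `aux` and `returnZero`. -/
inductive Sym8 : Type
  | zero
  | S
  | P
  | aux
  | returnZero
  deriving DecidableEq

/-- Arities: `0` has arity 0, all other symbols have arity 1. -/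
def ar8 : Sym8 → ℕ
  | .zero => 0
  | _ => 1

abbrev Term8 := Term Sym8 ar8

/-- The six rules: `S (P x) → x`; `P (S x) → x`; `returnZero x → aux x`;
`aux 0 → 0`; `aux (S x) → returnZero x`; `aux (P x) → returnZero x`. -/
def R8 : Set (Term8 × Term8) :=
  { (Term.app Sym8.S fun _ => Term.app Sym8.P fun _ => Term.var 0, Term.var 0),
    (Term.app Sym8.P fun _ => Term.app Sym8.S fun _ => Term.var 0, Term.var 0),
    (Term.app Sym8.returnZero fun _ => Term.var 0,
      Term.app Sym8.aux fun _ => Term.var 0),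
    (Term.app Sym8.aux fun _ => Term.app Sym8.zero Fin.elim0,
      Term.app Sym8.zero Fin.elim0),
    (Term.app Sym8.aux fun _ => Term.app Sym8.S fun _ => Term.var 0,
      Term.app Sym8.returnZero fun _ => Term.var 0),
    (Term.app Sym8.aux fun _ => Term.app Sym8.P fun _ => Term.var 0,
      Term.app Sym8.returnZero fun _ => Term.var 0) }


/-! Polynomial interpretation: read `0` as `0`, `S x` and `P x` as `x + 1`, `aux x` as `2x + 1`
and `returnZero x` as `2x + 2`. Every rule strictly decreases the value for every value of `x`
(e.g. `aux (S x) ↦ 2x + 3 > 2x + 2 ↤ returnZero x`), and every symbol is strictly monotone in its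
argument, so each rewrite step strictly decreases a natural number. -/

namespace Rew

variable {Sig : Type} {ar : Sig → ℕ} {R : Set (Term Sig ar × Term Sig ar)}

theorem measure_lt {m : Term Sig ar → ℕ}
    (rule_lt : ∀ l r, (l, r) ∈ R → ∀ γ, m (subst γ r) < m (subst γ l))
    (app_update_lt : ∀ t t', m t' < m t → ∀ f ts i,
      m (.app f (Function.update ts i t')) < m (.app f (Function.update ts i t)))
    {t t' : Term Sig ar} (h : Rew R t t') : m t' < m t := by
  induction h with
  | rule h γ => exact rule_lt _ _ h γ
  | ctx _ f ts i ih => exact app_update_lt _ _ ih f ts i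

theorem wellFounded_inv_of_measure {m : Term Sig ar → ℕ}
    (rule_lt : ∀ l r, (l, r) ∈ R → ∀ γ, m (subst γ r) < m (subst γ l))
    (app_update_lt : ∀ t t', m t' < m t → ∀ f ts i,
      m (.app f (Function.update ts i t')) < m (.app f (Function.update ts i t))) :
    WellFounded (fun t s => Rew R s t) :=
  Subrelation.wf (measure_lt rule_lt app_update_lt) (measure m).wf

end Rew

namespace Term8

def weight : Term8 → ℕ
  | .var _ => 0
  | .app .zero _ => 0
  | .app .S ts => weight (ts ⟨0, Nat.one_pos⟩) + 1
  | .app .P ts => weight (ts ⟨0, Nat.one_pos⟩) + 1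
  | .app .aux ts => 2 * weight (ts ⟨0, Nat.one_pos⟩) + 1
  | .app .returnZero ts => 2 * weight (ts ⟨0, Nat.one_pos⟩) + 2

theorem weight_subst_lt {l r : Term8} (h : (l, r) ∈ R8) (γ : ℕ → Term8) :
    weight (subst γ r) < weight (subst γ l) := by
  simp only [R8, Set.mem_insert_iff, Set.mem_singleton_iff, Prod.mk.injEq] at h
  rcases h with ⟨rfl, rfl⟩ | ⟨rfl, rfl⟩ | ⟨rfl, rfl⟩ | ⟨rfl, rfl⟩ | ⟨rfl, rfl⟩ | ⟨rfl, rfl⟩ <;>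
    simp only [subst, weight] <;> omega

theorem weight_app_update_lt {t t' : Term8} (h : weight t' < weight t) (f : Sym8)
    (ts : Fin (ar8 f) → Term8) (i : Fin (ar8 f)) :
    weight (.app f (Function.update ts i t')) < weight (.app f (Function.update ts i t)) := by
  cases f
  case zero => exact i.elim0
  all_goals
    obtain rfl : i = ⟨0, Nat.one_pos⟩ := Fin.ext (Nat.lt_one_iff.mp i.isLt)
    simp only [weight, Function.update_self]
    omega

end Term8

/-- The rewrite relation generated by the six rules is strongly normalizing:
every term is accessible for the inverse of the rewrite relation, i.e. there
is no infinite rewrite sequence starting from any term. -/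
theorem R8_strongly_normalizing :
    WellFounded (fun t s : Term8 => Rew R8 s t) :=
  Rew.wellFounded_inv_of_measure (fun _ _ => Term8.weight_subst_lt)
    fun _ _ h => Term8.weight_app_update_lt h
end
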